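/- Let 0 < α < 1 and 0 < T < ∞. There exists a constant C depending only on α and T such that for all 0 < t < T, ∫₀ᵗ s^{α/2−1} (T−t+s)^{α−1} ds ≤ C (1 + ω₁(T−t)). -/

import Mathlib

/-!
Write `u = T - t` and `β = 3α/2 - 1`. The integrand is nonnegative, so the integral over `[0, t]`
is at most the one over `[0, u + t] = [0, T]`. On `[0, u]` bound `(u + s)^(α-1) ≤ u^(α-1)`, which
gives `(2/α) u^β`; on `[u, T]` bound `(u + s)^(α-1) ≤ s^(α-1)`, which leaves `∫ᵤᵀ s^(β-1) ds`.
That is `log T - log u` when `β = 0` and at most `(T^β + u^β)/|β|` otherwise; both are controlled by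
`1 + ω₁(u)`.
-/

/-- `ω₁(t) = 1 + t^(3α/2−1)/|α(2−3α)|` if `α ≠ 2/3`, and `|ln t|` if `α = 2/3`. -/
noncomputable def omega1 (α t : ℝ) : ℝ :=
  if α = 2 / 3 then |Real.log t| else 1 + t ^ (3 * α / 2 - 1) / |α * (2 - 3 * α)|

open MeasureTheory Real Set

section RpowKernel

variable {p q u : ℝ}

lemma intervalIntegrable_rpow_mul_add_rpow (hp : -1 < p) (hq : q ≤ 0) (hu : 0 < u)
    {b : ℝ} (hb : 0 ≤ b) :
    IntervalIntegrable (fun s => s ^ p * (u + s) ^ q) volume 0 b := by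
  refine ((intervalIntegral.intervalIntegrable_rpow' hp).mul_const (u ^ q)).mono_fun' ?_ ?_
  · exact (by fun_prop : Measurable fun s : ℝ => s ^ p * (u + s) ^ q).aestronglyMeasurable
  · rw [Filter.EventuallyLE, ae_restrict_iff' measurableSet_uIoc]
    refine Filter.Eventually.of_forall fun s hs => ?_
    rw [uIoc_of_le hb] at hs
    have hs0 : 0 < s := hs.1
    rw [norm_of_nonneg (by positivity)]
    exact mul_le_mul_of_nonneg_left (rpow_le_rpow_of_nonpos hu (by linarith) hq) (by positivity)

lemma integral_rpow_mul_add_rpow_le_rpow_div (hp : -1 < p) (hq : q ≤ 0) (hu : 0 < u) :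
    ∫ s in (0 : ℝ)..u, s ^ p * (u + s) ^ q ≤ u ^ (p + q + 1) / (p + 1) := by
  have hp1 : 0 < p + 1 := by linarith
  calc ∫ s in (0 : ℝ)..u, s ^ p * (u + s) ^ q
      ≤ ∫ s in (0 : ℝ)..u, s ^ p * u ^ q := by
        refine intervalIntegral.integral_mono_on hu.le
          (intervalIntegrable_rpow_mul_add_rpow hp hq hu hu.le)
          ((intervalIntegral.intervalIntegrable_rpow' hp).mul_const _) fun s hs => ?_
        have hs0 : 0 ≤ s := hs.1
        exact mul_le_mul_of_nonneg_left (rpow_le_rpow_of_nonpos hu (by linarith) hq)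
          (by positivity)
    _ = u ^ (p + q + 1) / (p + 1) := by
        rw [intervalIntegral.integral_mul_const, integral_rpow (Or.inl hp),
          zero_rpow hp1.ne', sub_zero, add_right_comm, rpow_add hu (p + 1) q]
        ring

lemma integral_rpow_mul_add_rpow_le_integral_rpow (hq : q ≤ 0) (hu : 0 < u) {b : ℝ}
    (hub : u ≤ b) :
    ∫ s in u..b, s ^ p * (u + s) ^ q ≤ ∫ s in u..b, s ^ (p + q) := by
  have hpos : ∀ s ∈ uIcc u b, 0 < s := fun s hs => hu.trans_le (uIcc_of_le hub ▸ hs).1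
  refine intervalIntegral.integral_mono_on hub ?_ ?_ fun s hs => ?_
  · refine (ContinuousOn.mul ?_ ?_).intervalIntegrable <;>
      refine ContinuousOn.rpow_const (by fun_prop) fun s hs => Or.inl ?_
    · exact (hpos s hs).ne'
    · linarith [hpos s hs]
  · exact (continuousOn_id.rpow_const fun s hs => Or.inl (hpos s hs).ne').intervalIntegrable
  have hs0 : 0 < s := hu.trans_le hs.1
  rw [rpow_add hs0]
  exact mul_le_mul_of_nonneg_left (rpow_le_rpow_of_nonpos hs0 (by linarith) hq) (by positivity)

theorem integral_rpow_mul_add_rpow_le (hp : -1 < p) (hq : q ≤ 0) (hu : 0 < u) {t : ℝ}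
    (ht : 0 ≤ t) :
    ∫ s in (0 : ℝ)..t, s ^ p * (u + s) ^ q
      ≤ u ^ (p + q + 1) / (p + 1) + ∫ s in u..u + t, s ^ (p + q) := by
  have hfi := intervalIntegrable_rpow_mul_add_rpow hp hq hu (b := u + t) (by linarith)
  have hmid : u ∈ uIcc 0 (u + t) := mem_uIcc_of_le hu.le (by linarith)
  calc ∫ s in (0 : ℝ)..t, s ^ p * (u + s) ^ q
      ≤ ∫ s in (0 : ℝ)..u + t, s ^ p * (u + s) ^ q := by
        refine intervalIntegral.integral_mono_interval le_rfl ht (by linarith) ?_ hfi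
        rw [Filter.EventuallyLE, ae_restrict_iff' measurableSet_Ioc]
        exact Filter.Eventually.of_forall fun s hs => by
          have : 0 < s := hs.1
          positivity
    _ = (∫ s in (0 : ℝ)..u, s ^ p * (u + s) ^ q) + ∫ s in u..u + t, s ^ p * (u + s) ^ q :=
        (intervalIntegral.integral_add_adjacent_intervals
          (hfi.mono_set (uIcc_subset_uIcc left_mem_uIcc hmid))
          (hfi.mono_set (uIcc_subset_uIcc hmid right_mem_uIcc))).symm
    _ ≤ _ := add_le_add (integral_rpow_mul_add_rpow_le_rpow_div hp hq hu)
        (integral_rpow_mul_add_rpow_le_integral_rpow hq hu (by linarith))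

end RpowKernel

lemma integral_rpow_sub_one_le {a b β : ℝ} (ha : 0 < a) (hb : 0 < b) (hβ : β ≠ 0) :
    ∫ x in a..b, x ^ (β - 1) ≤ (b ^ β + a ^ β) / |β| := by
  rw [integral_rpow (Or.inr ⟨by simpa using hβ, notMem_uIcc_of_lt ha hb⟩), sub_add_cancel]
  calc (b ^ β - a ^ β) / β ≤ |b ^ β - a ^ β| / |β| := by
        rw [← abs_div]; exact le_abs_self _
    _ ≤ (b ^ β + a ^ β) / |β| := by
        gcongr
        rw [abs_le]
        constructor <;> linarith [rpow_pos_of_pos ha β, rpow_pos_of_pos hb β]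

lemma integral_kernel_le {α t T : ℝ} (hα : 0 < α) (hα1 : α < 1) (ht : t ∈ Ioo 0 T) :
    (∫ s in (0 : ℝ)..t, s ^ (α / 2 - 1) * (T - t + s) ^ (α - 1))
      ≤ (T - t) ^ (3 * α / 2 - 1) / (α / 2) + ∫ s in (T - t)..T, s ^ (3 * α / 2 - 1 - 1) := by
  have h := integral_rpow_mul_add_rpow_le (p := α / 2 - 1) (q := α - 1) (by linarith)
    (by linarith) (sub_pos.2 ht.2) ht.1.le
  rwa [sub_add_cancel, show α / 2 - 1 + (α - 1) + 1 = 3 * α / 2 - 1 by ring,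
    show α / 2 - 1 + (α - 1) = 3 * α / 2 - 1 - 1 by ring, sub_add_cancel] at h

/-- Convolution-kernel integral estimate with the stronger singularity `s^(α/2−1)`:
`∫₀ᵗ s^(α/2−1) (T−t+s)^(α−1) ds ≤ C (1 + ω₁(T−t))` for all `0 < t < T`. -/
theorem convolution_kernel_integral_omega1
    (α T : ℝ) (hα : 0 < α) (hα1 : α < 1) (hT : 0 < T) :
    ∃ C > (0 : ℝ), ∀ t ∈ Set.Ioo (0 : ℝ) T,
      (∫ s in (0 : ℝ)..t, s ^ (α / 2 - 1) * (T - t + s) ^ (α - 1))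
        ≤ C * (1 + omega1 α (T - t)) := by
  rcases eq_or_ne α (2 / 3) with rfl | h23
  · refine ⟨3 + |log T|, by positivity, fun t ht => ?_⟩
    have hu : 0 < T - t := sub_pos.2 ht.2
    have h := integral_kernel_le hα hα1 ht
    rw [show (3 : ℝ) * (2 / 3) / 2 - 1 = 0 by norm_num, rpow_zero, zero_sub] at h
    simp only [rpow_neg_one] at h
    rw [integral_inv_of_pos hu (ht.1.trans ht.2), log_div (by linarith) hu.ne'] at h
    rw [omega1, if_pos rfl]
    nlinarith [le_abs_self (log T), neg_abs_le (log (T - t)), abs_nonneg (log T),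
      abs_nonneg (log (T - t))]
  · set β := 3 * α / 2 - 1 with hβ_def
    set K := |α * (2 - 3 * α)| with hK_def
    have hβ : β ≠ 0 := fun h => h23 (by linarith)
    have hK : 0 < K := abs_pos.2 (mul_ne_zero hα.ne' fun h => hβ (by linarith))
    refine ⟨(2 / α + 1 / |β|) * K + T ^ β / |β|, by positivity, fun t ht => ?_⟩
    have hu : 0 < T - t := sub_pos.2 ht.2
    have h := (integral_kernel_le hα hα1 ht).trans
      (add_le_add_right (integral_rpow_sub_one_le hu (ht.1.trans ht.2) hβ) _)
    have hsplit : (T - t) ^ β / (α / 2) + (T ^ β + (T - t) ^ β) / |β|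
        = (2 / α + 1 / |β|) * K * ((T - t) ^ β / K) + T ^ β / |β| := by
      field_simp
      ring
    rw [omega1, if_neg h23, ← hβ_def, ← hK_def]
    have hA : 0 < (2 / α + 1 / |β|) * K := by positivity
    have hB : 0 ≤ T ^ β / |β| := by positivity
    have hX : 0 ≤ (T - t) ^ β / K := by positivity
    nlinarith [mul_nonneg hB hX]
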